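/- There is no first-order formula φ(x, y) with two free variables over the language with a single binary relation symbol such that for every dimension n ≥ 1 and all partial instances e, e' of dimension n, the structure A_n ⊨ φ(e, e') if and only if |e_⊥| ≥ |e'_⊥|. -/

import Mathlib

open FirstOrder FirstOrder.Language

abbrev PI (n : ℕ) : Type := Fin n → Option Bool

def Subs {n : ℕ} (e e' : PI n) : Prop := ∀ i, e i ≠ none → e' i = e i

noncomputable def undefCard {n : ℕ} (e : PI n) : ℕ := Set.ncard {i | e i = none}

/-- The language with a single binary relation symbol. -/
def subLang : Language where
  Functions _ := Empty
  Relations n := match n with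
    | 2 => Unit
    | _ => Empty

/-- The structure `A_n`: partial instances of dimension `n` with subsumption `⊑`. -/
instance subStruct (n : ℕ) : subLang.Structure (PI n) where
  funMap := fun {_} f => f.elim
  RelMap := fun {k} r v => match k, r with
    | 2, _ => Subs (v 0) (v 1)

/-! Both `=` and `⊑` are read off coordinatewise, so a tuple of elements of `A_n` matters only
through the multiset of its columns (the vector of its entries at one coordinate). For every
formula there is a threshold `N` (`3 ^ k` for quantifier depth `k`) such that tuples whose column
multiplicities agree after truncation at `N` satisfy it alike: a new element added to one tuple is
matched in the other by splitting each class of equal columns according to the three values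
`⊥, 0, 1`, which needs the threshold to drop by the factor `3`. With this `N`, the pairs
`(e, e') = (⊥^N 0^(N+1), 0^N ⊥^(N+1))` and `(e', e)` consist of the columns `(⊥, 0)` and `(0, ⊥)`,
each at least `N` times, so the formula cannot separate them although `|e_⊥| < |e'_⊥|`. -/

open Function

section Columns

variable {γ ι V : Type*}

noncomputable def colCount (f : γ → ι → V) (τ : γ → V) : ℕ :=
  Nat.card {j // swap f j = τ}

def ColEquiv (N : ℕ) (f g : γ → ι → V) : Prop :=
  ∀ τ, min (colCount f τ) N = min (colCount g τ) N

namespace ColEquiv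

variable {N : ℕ} {f g : γ → ι → V}

theorem symm (h : ColEquiv N f g) : ColEquiv N g f := fun τ => (h τ).symm

theorem mono {M : ℕ} (hMN : M ≤ N) (h : ColEquiv N f g) : ColEquiv M f g := fun τ => by
  rw [← min_eq_right hMN, ← min_assoc, ← min_assoc, h τ]

theorem comp_equiv {δ : Type*} (h : ColEquiv N f g) (e : δ ≃ γ) :
    ColEquiv N (f ∘ e) (g ∘ e) := by
  have key : ∀ (f : γ → ι → V) σ, colCount (f ∘ e) σ = colCount f (σ ∘ e.symm) := fun f σ =>
    Nat.card_congr (Equiv.subtypeEquivRight fun j => (e.eq_comp_symm (swap f j) σ).symm)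
  exact fun σ => by rw [key, key, h]

theorem exists_swap_eq [Finite ι] (h : ColEquiv 1 f g) (j : ι) :
    ∃ j', swap f j' = swap g j := by
  have hg : 0 < colCount g (swap g j) := Nat.card_pos_iff.2 ⟨⟨⟨j, rfl⟩⟩, inferInstance⟩
  have hf : 0 < colCount f (swap g j) := by have := h (swap g j); omega
  obtain ⟨⟨⟨j', hj'⟩⟩, -⟩ := Nat.card_pos_iff.1 hf
  exact ⟨j', hj'⟩

theorem forall_iff [Finite ι] (h : ColEquiv 1 f g) (r : V → V → Prop) (s t : γ) :
    (∀ j, r (f s j) (f t j)) ↔ ∀ j, r (g s j) (g t j) := by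
  have key : ∀ {f g : γ → ι → V}, ColEquiv 1 f g →
      (∀ j, r (f s j) (f t j)) → ∀ j, r (g s j) (g t j) := by
    intro f g h hf j
    obtain ⟨j', hj'⟩ := h.exists_swap_eq j
    simpa only [← congrFun hj'] using hf j'
  exact ⟨key h, key h.symm⟩

end ColEquiv

end Columns

section Fibers

open Finset

variable {V : Type*} [Fintype V]

theorem exists_sum_eq_and_min_eq [Nonempty V] (a : V → ℕ) {B N : ℕ}
    (h : min (∑ v, a v) (Fintype.card V * N) = min B (Fintype.card V * N)) :
    ∃ b : V → ℕ, ∑ v, b v = B ∧ ∀ v, min (a v) N = min (b v) N := by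
  classical
  by_cases hB : ∑ v, a v = B
  · exact ⟨a, hB, fun _ => rfl⟩
  have hsum : Fintype.card V * N ≤ ∑ v, a v := by omega
  have hBN : Fintype.card V * N ≤ B := by omega
  -- a largest part of `a` is at least `N`; it absorbs all of `B` beyond the truncated other parts
  obtain ⟨v₀, hv₀⟩ := Finite.exists_max a
  have hN : N ≤ a v₀ := by
    have : ∑ v, a v ≤ Fintype.card V * a v₀ := by
      simpa using sum_le_card_nsmul univ a (a v₀) fun v _ => hv₀ v
    exact le_of_mul_le_mul_left (hsum.trans this) Fintype.card_pos
  set S := ∑ v ∈ univ.erase v₀, min (a v) N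
  have hS : S + N ≤ Fintype.card V * N := calc
    S + N ≤ (Fintype.card V - 1) * N + N := by
      gcongr
      simpa [card_erase_of_mem] using
        sum_le_card_nsmul (univ.erase v₀) (fun v => min (a v) N) N fun _ _ => min_le_right _ _
    _ = Fintype.card V * N := by
      rw [← Nat.succ_mul, Nat.succ_eq_add_one, Nat.sub_add_cancel Fintype.card_pos]
  refine ⟨update (fun v => min (a v) N) v₀ (B - S), ?_, fun v => ?_⟩
  · rw [← add_sum_erase univ _ (mem_univ v₀), update_self,
      sum_congr rfl fun v hv => update_of_ne (ne_of_mem_erase hv) _ _]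
    omega
  · rcases eq_or_ne v v₀ with rfl | hv
    · rw [update_self]; omega
    · rw [update_of_ne hv, min_eq_left (min_le_right _ _)]

theorem exists_card_fiber_eq {B : Type*} [Finite B] (b : V → ℕ) (h : ∑ v, b v = Nat.card B) :
    ∃ d : B → V, ∀ v, Nat.card {x // d x = v} = b v := by
  obtain ⟨e⟩ : Nonempty (B ≃ Σ v, Fin (b v)) := Finite.card_eq.1 (by simp [h])
  refine ⟨fun x => (e x).1, fun v => ?_⟩
  rw [Nat.card_congr (e.subtypeEquiv (q := fun t => t.1 = v) fun _ => Iff.rfl),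
    Nat.card_congr (Equiv.sigmaSubtype v), Nat.card_eq_fintype_card, Fintype.card_fin]

theorem exists_min_card_fiber_eq [Nonempty V] {A B : Type*} [Finite A] [Finite B] {N : ℕ}
    (hAB : min (Nat.card A) (Fintype.card V * N) = min (Nat.card B) (Fintype.card V * N))
    (c : A → V) :
    ∃ d : B → V, ∀ w, min (Nat.card {x // c x = w}) N = min (Nat.card {y // d y = w}) N := by
  have hsum : ∑ w, Nat.card {x // c x = w} = Nat.card A := by
    rw [← Nat.card_sigma, Nat.card_congr (Equiv.sigmaFiberEquiv c)]
  obtain ⟨b, hb, hmin⟩ := exists_sum_eq_and_min_eq _ (hsum ▸ hAB)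
  obtain ⟨d, hd⟩ := exists_card_fiber_eq b hb
  exact ⟨d, fun w => by rw [hmin, hd]⟩

end Fibers

section Extension

variable {γ ι V : Type*}

theorem colCount_optionElim' (c : ι → V) (f : γ → ι → V) (σ : Option γ → V) :
    colCount (Option.elim' c f) σ =
      Nat.card {x : {j // swap f j = σ ∘ some} // c x = σ none} := by
  refine Nat.card_congr ((Equiv.subtypeEquivRight fun j => ?_).trans
    (Equiv.subtypeSubtypeEquivSubtypeInter (swap f · = σ ∘ some) (c · = σ none)).symm)
  simp only [funext_iff, Option.forall, swap, Option.elim', comp]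
  exact and_comm

theorem ColEquiv.exists_extend [Finite ι] [Fintype V] [Nonempty V] {N : ℕ} {f g : γ → ι → V}
    (h : ColEquiv (Fintype.card V * N) f g) (c : ι → V) :
    ∃ d : ι → V, ColEquiv N (Option.elim' c f) (Option.elim' d g) := by
  choose D hD using fun τ => exists_min_card_fiber_eq (h τ) fun x : {j // swap f j = τ} => c x
  have hDg : ∀ τ (y : {j // swap g j = τ}), D (swap g y) ⟨y, rfl⟩ = D τ y := by
    rintro τ ⟨j, rfl⟩; rfl
  refine ⟨fun j => D (swap g j) ⟨j, rfl⟩, fun σ => ?_⟩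
  rw [colCount_optionElim', colCount_optionElim']
  simp only [hDg]
  exact hD _ _

theorem ColEquiv.sumElim_snoc {α : Type*} {ℓ N : ℕ} {v v' : α → ι → V}
    {xs xs' : Fin ℓ → ι → V} {c c' : ι → V}
    (h : ColEquiv N (Option.elim' c (Sum.elim v xs)) (Option.elim' c' (Sum.elim v' xs'))) :
    ColEquiv N (Sum.elim v (Fin.snoc xs c)) (Sum.elim v' (Fin.snoc xs' c')) := by
  let E : α ⊕ Fin (ℓ + 1) ≃ Option (α ⊕ Fin ℓ) :=
    (Equiv.sumCongr (.refl α) (finSuccEquivLast.trans (Equiv.optionEquivSumPUnit.{0} _))).trans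
      ((Equiv.sumAssoc _ _ _).symm.trans (Equiv.optionEquivSumPUnit.{0} _).symm)
  have hE : ∀ (v : α → ι → V) xs c,
      Option.elim' c (Sum.elim v xs) ∘ E = Sum.elim v (Fin.snoc xs c) := by
    intro v xs c
    funext x
    rcases x with a | i
    · rfl
    · induction i using Fin.lastCases <;> simp [E]
  rw [← hE, ← hE]
  exact h.comp_equiv E

end Extension

theorem subLang_term_eq_var {β : Type*} (t : subLang.Term β) : ∃ s, t = Term.var s := by
  rcases t with s | ⟨f, _⟩
  · exact ⟨s, rfl⟩
  · exact f.elim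

theorem relMap_iff_of_colEquiv {β : Type*} {n : ℕ} {F G : β → PI n} (h : ColEquiv 1 F G)
    {l : ℕ} (R : subLang.Relations l) (ts : Fin l → subLang.Term β) :
    Structure.RelMap R (fun i => (ts i).realize F) ↔
      Structure.RelMap R (fun i => (ts i).realize G) := by
  match l, R with
  | 0, R | 1, R | _ + 3, R => exact R.elim
  | 2, _ =>
    obtain ⟨s, hs⟩ := subLang_term_eq_var (ts 0)
    obtain ⟨t, ht⟩ := subLang_term_eq_var (ts 1)
    show Subs ((ts 0).realize F) ((ts 1).realize F) ↔ Subs ((ts 0).realize G) ((ts 1).realize G)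
    rw [hs, ht]
    exact h.forall_iff (fun a b => a ≠ none → b = a) s t

theorem FirstOrder.Language.BoundedFormula.exists_colEquiv_realize_iff {α : Type*} {ℓ : ℕ}
    (φ : subLang.BoundedFormula α ℓ) :
    ∃ N, ∀ {n} (v v' : α → PI n) (xs xs' : Fin ℓ → PI n),
      ColEquiv N (Sum.elim v xs) (Sum.elim v' xs') → (φ.Realize v xs ↔ φ.Realize v' xs') := by
  induction φ with
  | falsum => exact ⟨0, fun _ _ _ _ _ => Iff.rfl⟩
  | equal t₁ t₂ =>
    refine ⟨1, fun v v' xs xs' h => ?_⟩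
    obtain ⟨s, rfl⟩ := subLang_term_eq_var t₁
    obtain ⟨t, rfl⟩ := subLang_term_eq_var t₂
    simpa only [BoundedFormula.Realize, Term.realize, funext_iff] using h.forall_iff Eq s t
  | rel R ts => exact ⟨1, fun v v' xs xs' h => relMap_iff_of_colEquiv h R ts⟩
  | imp φ ψ ihφ ihψ =>
    obtain ⟨N₁, h₁⟩ := ihφ
    obtain ⟨N₂, h₂⟩ := ihψ
    refine ⟨max N₁ N₂, fun v v' xs xs' h => ?_⟩
    rw [realize_imp, realize_imp, h₁ v v' xs xs' (h.mono (le_max_left _ _)),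
      h₂ v v' xs xs' (h.mono (le_max_right _ _))]
  | all φ ih =>
    obtain ⟨N, hN⟩ := ih
    have step : ∀ {n} (v v' : α → PI n) xs xs',
        ColEquiv (Fintype.card (Option Bool) * N) (Sum.elim v xs) (Sum.elim v' xs') →
          φ.all.Realize v xs → φ.all.Realize v' xs' := by
      intro n v v' xs xs' h H c'
      obtain ⟨d, hd⟩ := h.symm.exists_extend c'
      exact (hN _ _ _ _ hd.sumElim_snoc.symm).1 (H d)
    exact ⟨_, fun v v' xs xs' h => ⟨step v v' xs xs' h, step v' v xs' xs h.symm⟩⟩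

theorem FirstOrder.Language.Formula.exists_colEquiv_realize_iff {α : Type*}
    (φ : subLang.Formula α) :
    ∃ N, ∀ {n} (v v' : α → PI n), ColEquiv N v v' → (φ.Realize v ↔ φ.Realize v') := by
  obtain ⟨N, hN⟩ := BoundedFormula.exists_colEquiv_realize_iff φ
  refine ⟨N, fun {n} v v' h => hN v v' _ _ ?_⟩
  have hv : ∀ (w : α → PI n) (xs : Fin 0 → PI n),
      Sum.elim w xs = w ∘ Equiv.sumEmpty α (Fin 0) :=
    fun w xs => funext fun x => by rcases x with a | ⟨_, ⟨⟩⟩; rfl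
  rw [hv, hv]
  exact h.comp_equiv _

theorem natCard_subtype_finAppend {X : Type*} {a b : ℕ} (u : Fin a → X) (w : Fin b → X)
    (P : X → Prop) :
    Nat.card {i // P (Fin.append u w i)} = Nat.card {i // P (u i)} + Nat.card {i // P (w i)} := by
  rw [← Nat.card_sum]
  refine Nat.card_congr ((finSumFinEquiv.symm.subtypeEquiv (q := fun x => P (Sum.elim u w x))
    fun i => ?_).trans Equiv.subtypeSum)
  induction i using Fin.addCases <;> simp

theorem colEquiv_swap_finAppend_const {γ V : Type*} (σ ρ : γ → V) {N a b : ℕ} (ha : N ≤ a)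
    (hb : N ≤ b) :
    ColEquiv N (swap (Fin.append (fun _ : Fin a => σ) fun _ : Fin b => ρ))
      (swap (Fin.append (fun _ : Fin a => ρ) fun _ : Fin b => σ)) := by
  intro τ
  simp only [colCount, natCard_subtype_finAppend (P := (· = τ))]
  by_cases hσ : σ = τ <;> by_cases hρ : ρ = τ <;> simp [hσ, hρ] <;> omega

theorem stmt1 :
    ¬ ∃ φ : subLang.Formula (Fin 2),
      ∀ (n : ℕ), 1 ≤ n → ∀ (e e' : PI n),
        (φ.Realize ![e, e'] ↔ undefCard e' ≤ undefCard e) := by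
  rintro ⟨φ, hφ⟩
  obtain ⟨N, hN⟩ := φ.exists_colEquiv_realize_iff
  let e : PI (N + (N + 1)) := Fin.append (fun _ => none) fun _ => some false
  let e' : PI (N + (N + 1)) := Fin.append (fun _ => some false) fun _ => none
  have hcard : undefCard e = N ∧ undefCard e' = N + 1 := by
    simp only [undefCard, ← Nat.card_coe_set_eq, Set.coe_ofPred, e, e',
      natCard_subtype_finAppend (P := (· = none))]
    simp
  have hpair : ColEquiv N ![e, e'] ![e', e] := by
    convert colEquiv_swap_finAppend_const ![none, some false] ![some false, none] le_rfl
      (Nat.le_succ N) using 1 <;>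
    · ext s j
      fin_cases s <;> induction j using Fin.addCases <;> simp [e, e', swap]
  have h₁ := hφ _ (by omega) e e'
  have h₂ := hφ _ (by omega) e' e
  rw [hcard.1, hcard.2] at h₁ h₂
  have := h₁.1 ((hN _ _ hpair).2 (h₂.2 (by omega)))
  omega
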